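/- Let H₁, H₂ be linear hyperplanes in ℝ^{n-1,2} of signature (n-1,1) with unit normal vectors N₁, N₂ (so ⟨Nᵢ,Nᵢ⟩ = −1). If H₁ ∩ H₂ ∩ AdS_n ≠ ∅ and H₁ ≠ H₂, then |⟨N₁,N₂⟩| > 1, so the angle θ ≥ 0 defined by cosh θ = |⟨N₁,N₂⟩| exists and is positive. -/
import Mathlib

/-- The bilinear form of signature `(n-1,2)` on `ℝ^{n+1}`. -/
def adsForm (n : ℕ) (x y : Fin (n + 1) → ℝ) : ℝ :=
  ∑ i : Fin (n + 1), (if (i : ℕ) < n - 1 then (1 : ℝ) else -1) * x i * y i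

def adsP (m : ℕ) (v w : Fin (m + 2) → ℝ) : ℝ :=
  ∑ i : Fin m, v i.castSucc.castSucc * w i.castSucc.castSucc

lemma adsForm_split (m : ℕ) (v w : Fin (m + 2) → ℝ) :
    adsForm (m + 1) v w = adsP m v w
      - v (Fin.last m).castSucc * w (Fin.last m).castSucc
      - v (Fin.last (m + 1)) * w (Fin.last (m + 1)) := by
  rw [adsForm, Fin.sum_univ_castSucc, Fin.sum_univ_castSucc, adsP]
  have h1 : ∀ i : Fin m, ((i.castSucc.castSucc : ℕ) < m + 1 - 1) = True := by
    intro i; simp [Nat.add_sub_cancel, i.is_lt]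
  simp only [Fin.coe_castSucc, Fin.val_last, Nat.add_sub_cancel, Fin.is_lt, if_true,
    lt_irrefl, if_false]
  have h2 : ¬ (m + 1 < m) := by omega
  rw [if_neg h2]
  ring

lemma adsForm_comm (n : ℕ) (v w : Fin (n + 1) → ℝ) : adsForm n v w = adsForm n w v := by
  unfold adsForm; exact Finset.sum_congr rfl fun i _ => by ring

lemma adsForm_add_mul_left (n : ℕ) (a : ℝ) (u v z : Fin (n + 1) → ℝ) :
    adsForm n (fun i => u i + a * v i) z = adsForm n u z + a * adsForm n v z := by
  unfold adsForm
  rw [Finset.mul_sum, ← Finset.sum_add_distrib]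
  exact Finset.sum_congr rfl fun i _ => by ring

lemma adsForm_mul_right (n : ℕ) (a : ℝ) (u v : Fin (n + 1) → ℝ) :
    adsForm n u (fun i => a * v i) = a * adsForm n u v := by
  unfold adsForm
  rw [Finset.mul_sum]
  exact Finset.sum_congr rfl fun i _ => by ring

lemma adsForm_expand (n : ℕ) (a b : ℝ) (u v z : Fin (n + 1) → ℝ) :
    adsForm n (fun i => u i + a * v i + b * z i) (fun i => u i + a * v i + b * z i)
      = adsForm n u u + a ^ 2 * adsForm n v v + b ^ 2 * adsForm n z z
        + 2 * a * adsForm n u v + 2 * b * adsForm n u z + 2 * a * b * adsForm n v z := by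
  unfold adsForm
  rw [Finset.mul_sum, Finset.mul_sum, Finset.mul_sum, Finset.mul_sum, Finset.mul_sum,
    ← Finset.sum_add_distrib, ← Finset.sum_add_distrib, ← Finset.sum_add_distrib,
    ← Finset.sum_add_distrib, ← Finset.sum_add_distrib]
  exact Finset.sum_congr rfl fun i _ => by ring

lemma adsP_nonneg (m : ℕ) (v : Fin (m + 2) → ℝ) : 0 ≤ adsP m v v :=
  Finset.sum_nonneg fun i _ => mul_self_nonneg _

lemma adsP_cs (m : ℕ) (v w : Fin (m + 2) → ℝ) :
    (adsP m v w) ^ 2 ≤ adsP m v v * adsP m w w := by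
  have := Finset.sum_mul_sq_le_sq_mul_sq Finset.univ
    (fun i : Fin m => v i.castSucc.castSucc) (fun i : Fin m => w i.castSucc.castSucc)
  unfold adsP
  calc (∑ i : Fin m, v i.castSucc.castSucc * w i.castSucc.castSucc) ^ 2
      ≤ (∑ i : Fin m, v i.castSucc.castSucc ^ 2) * (∑ i : Fin m, w i.castSucc.castSucc ^ 2) := this
    _ = _ := by
        congr 1 <;> exact Finset.sum_congr rfl fun i _ => by ring

lemma adsP_eq_zero (m : ℕ) (v : Fin (m + 2) → ℝ) (h : adsP m v v = 0) (i : Fin m) :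
    v i.castSucc.castSucc = 0 := by
  have := (Finset.sum_eq_zero_iff_of_nonneg
    (fun j _ => mul_self_nonneg (v j.castSucc.castSucc))).mp h i (Finset.mem_univ i)
  exact mul_self_eq_zero.mp this

set_option maxHeartbeats 1000000 in
lemma key_succ (m : ℕ) (N₁ N₂ x : Fin (m + 2) → ℝ)
    (h₁ : adsForm (m + 1) N₁ N₁ = -1) (h₂ : adsForm (m + 1) N₂ N₂ = -1)
    (hx1 : adsForm (m + 1) x N₁ = 0) (hx2 : adsForm (m + 1) x N₂ = 0)
    (hxx : adsForm (m + 1) x x = -1) :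
    1 < (adsForm (m + 1) N₁ N₂) ^ 2 ∨
      ((adsForm (m + 1) N₁ N₂) ^ 2 = 1 ∧
        ∀ i, N₂ i = -(adsForm (m + 1) N₁ N₂) * N₁ i) := by
  set c := adsForm (m + 1) N₁ N₂ with hc
  set W : Fin (m + 2) → ℝ := fun i => N₂ i + c * N₁ i with hW
  have hN2N1 : adsForm (m + 1) N₂ N₁ = c := by rw [adsForm_comm]
  have hwN1 : adsForm (m + 1) W N₁ = 0 := by
    rw [hW, adsForm_add_mul_left, hN2N1, h₁]; ring
  have hwx : adsForm (m + 1) W x = 0 := by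
    rw [hW, adsForm_add_mul_left, adsForm_comm (m + 1) N₂ x, adsForm_comm (m + 1) N₁ x,
      hx1, hx2]; ring
  have e1 : adsForm (m + 1) N₂ W = -1 + c * c := by
    rw [adsForm_comm, hW, adsForm_add_mul_left, h₂, ← hc]
  have e2 : adsForm (m + 1) N₁ W = 0 := by rw [adsForm_comm]; exact hwN1
  have hww : adsForm (m + 1) W W = c ^ 2 - 1 := by
    rw [hW, adsForm_add_mul_left, ← hW, e1, e2]; ring
  set A : Fin (m + 2) := (Fin.last m).castSucc with hA
  set B : Fin (m + 2) := Fin.last (m + 1) with hB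
  have E1 : adsP m x x - x A * x A - x B * x B = -1 := by rw [← adsForm_split]; exact hxx
  have E2 : adsP m N₁ N₁ - N₁ A * N₁ A - N₁ B * N₁ B = -1 := by
    rw [← adsForm_split]; exact h₁
  have E3 : adsP m x N₁ - x A * N₁ A - x B * N₁ B = 0 := by rw [← adsForm_split]; exact hx1
  have hcs := adsP_cs m x N₁
  have p1 := adsP_nonneg m x
  have p2 := adsP_nonneg m N₁
  set D : ℝ := x A * N₁ B - x B * N₁ A with hD
  have s1 : x A * x A + x B * x B = adsP m x x + 1 := by linarith
  have s2 : N₁ A * N₁ A + N₁ B * N₁ B = adsP m N₁ N₁ + 1 := by linarith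
  have s3 : x A * N₁ A + x B * N₁ B = adsP m x N₁ := by linarith
  have hD2 : D ^ 2 = (adsP m x x + 1) * (adsP m N₁ N₁ + 1) - (adsP m x N₁) ^ 2 := by
    rw [hD, ← s1, ← s2, ← s3]; ring
  have hDpos : 0 < D ^ 2 := by rw [hD2]; nlinarith [hcs, p1, p2]
  have hDne : D ≠ 0 := by intro h; rw [h] at hDpos; norm_num at hDpos
  set α : ℝ := (W B * N₁ A - W A * N₁ B) / D with hα
  set β : ℝ := (x B * W A - x A * W B) / D with hβ
  have hyA : W A + α * x A + β * N₁ A = 0 := by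
    rw [hα, hβ]; field_simp; rw [hD]; ring
  have hyB : W B + α * x B + β * N₁ B = 0 := by
    rw [hα, hβ]; field_simp; rw [hD]; ring
  have hYalg : adsForm (m + 1) (fun i => W i + α * x i + β * N₁ i)
      (fun i => W i + α * x i + β * N₁ i) = (c ^ 2 - 1) - α ^ 2 - β ^ 2 := by
    rw [adsForm_expand, hww, hxx, h₁, hwx, hwN1, hx1]; ring
  have hYsplit : adsForm (m + 1) (fun i => W i + α * x i + β * N₁ i)
      (fun i => W i + α * x i + β * N₁ i)
      = adsP m (fun i => W i + α * x i + β * N₁ i) (fun i => W i + α * x i + β * N₁ i) := by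
    rw [adsForm_split]
    simp only [← hA, ← hB, hyA, hyB]
    ring
  have hPY : adsP m (fun i => W i + α * x i + β * N₁ i) (fun i => W i + α * x i + β * N₁ i)
      = c ^ 2 - 1 - α ^ 2 - β ^ 2 := by rw [← hYsplit, hYalg]
  have hPYnn := adsP_nonneg m (fun i => W i + α * x i + β * N₁ i)
  by_cases hgt : 1 < c ^ 2
  · exact Or.inl hgt
  right
  have hc2 : c ^ 2 = 1 := le_antisymm (not_lt.mp hgt) (by nlinarith)
  have hα0 : α = 0 := by
    have h2 : α ^ 2 = 0 := le_antisymm (by nlinarith [sq_nonneg β]) (sq_nonneg α)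
    exact sq_eq_zero_iff.mp h2
  have hβ0 : β = 0 := by
    have h2 : β ^ 2 = 0 := le_antisymm (by nlinarith [sq_nonneg α]) (sq_nonneg β)
    exact sq_eq_zero_iff.mp h2
  have hWA : W A = 0 := by rw [hα0, hβ0] at hyA; linarith
  have hWB : W B = 0 := by rw [hα0, hβ0] at hyB; linarith
  have hPW : adsP m W W = 0 := by
    have : adsP m (fun i => W i + α * x i + β * N₁ i) (fun i => W i + α * x i + β * N₁ i)
        = adsP m W W := by rw [hα0, hβ0]; simp
    rw [this] at hPY
    rw [hPY, hc2, hα0, hβ0]; ring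
  have hWz : ∀ i, W i = 0 := by
    intro i
    by_cases h : (i : ℕ) < m
    · have hi : i = (⟨(i : ℕ), h⟩ : Fin m).castSucc.castSucc := by
        apply Fin.ext; simp
      rw [hi]; exact adsP_eq_zero m W hPW _
    · by_cases h2 : (i : ℕ) = m
      · have hi : i = A := by apply Fin.ext; simp [hA, h2]
        rw [hi]; exact hWA
      · have hi : i = B := by
          apply Fin.ext; simp [hB]; omega
        rw [hi]; exact hWB
  refine ⟨hc2, fun i => ?_⟩
  have := hWz i
  rw [hW] at this
  simp only at this
  linarith

/-- if `H₁ = N₁^⊥`, `H₂ = N₂^⊥` are distinct space-like hyperplanes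
(with unit time-like normals `⟨Nᵢ,Nᵢ⟩ = −1`) whose intersection meets `AdS_n`, then
`|⟨N₁,N₂⟩| > 1`, so the angle `θ > 0` with `cosh θ = |⟨N₁,N₂⟩|` exists. -/
theorem stmt_8 (n : ℕ) (N₁ N₂ : Fin (n + 1) → ℝ)
    (h₁ : adsForm n N₁ N₁ = -1) (h₂ : adsForm n N₂ N₂ = -1)
    (hdist : {v | adsForm n v N₁ = 0} ≠ {v | adsForm n v N₂ = 0})
    (hmeet : ∃ x, adsForm n x N₁ = 0 ∧ adsForm n x N₂ = 0 ∧ adsForm n x x = -1) :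
    |adsForm n N₁ N₂| > 1 ∧
    ∃ θ : ℝ, θ > 0 ∧ Real.cosh θ = |adsForm n N₁ N₂| := by
  obtain ⟨x, hx1, hx2, hxx⟩ := hmeet
  have key : 1 < (adsForm n N₁ N₂) ^ 2 := by
    cases n with
    | zero =>
      exfalso
      simp [adsForm, Fin.sum_univ_one] at hx1 h₁ hxx
      rcases hx1 with h | h <;> nlinarith
    | succ m =>
      rcases key_succ m N₁ N₂ x h₁ h₂ hx1 hx2 hxx with h | ⟨hc2, hfun⟩
      · exact h
      exfalso
      apply hdist
      have hc0 : adsForm (m + 1) N₁ N₂ ≠ 0 := by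
        intro h0; rw [h0] at hc2; norm_num at hc2
      have hN2 : N₂ = fun i => -(adsForm (m + 1) N₁ N₂) * N₁ i := funext hfun
      ext v
      simp only [Set.mem_setOf_eq]
      rw [hN2, adsForm_mul_right]
      constructor
      · intro h; rw [h]; ring
      · intro h
        rcases mul_eq_zero.mp h with h | h
        · exact absurd (neg_eq_zero.mp h) hc0
        · exact h
  set c := adsForm n N₁ N₂ with hc
  have habs : 1 < |c| := by nlinarith [sq_abs c, abs_nonneg c]
  refine ⟨habs, Real.log (|c| + Real.sqrt (c ^ 2 - 1)), ?_, ?_⟩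
  · apply Real.log_pos
    nlinarith [Real.sqrt_nonneg (c ^ 2 - 1)]
  · have hpos : 0 < |c| + Real.sqrt (c ^ 2 - 1) := by
      nlinarith [Real.sqrt_nonneg (c ^ 2 - 1)]
    rw [Real.cosh_log hpos]
    have hs : Real.sqrt (c ^ 2 - 1) ^ 2 = c ^ 2 - 1 := Real.sq_sqrt (by nlinarith)
    have hprod : (|c| + Real.sqrt (c ^ 2 - 1)) * (|c| - Real.sqrt (c ^ 2 - 1)) = 1 := by
      nlinarith [sq_abs c, hs]
    have hinv : (|c| + Real.sqrt (c ^ 2 - 1))⁻¹ = |c| - Real.sqrt (c ^ 2 - 1) :=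
      inv_eq_of_mul_eq_one_right hprod
    rw [hinv]; ring
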